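/- arXiv:2401.03583 — 3 statements merged into one kernel-verified Lean document; each statement's English description precedes it below -/
import Mathlib

section
/- Let $p \in [1,2]$, and let $u: \mathbb{R}^3 \to \mathbb{R}^\nu$ be differentiable at a boundary point with full gradient $Du$ decomposed into tangential part $D_\top u$ and normal part $D_\perp u = Du[\nu]$ along a unit vector $\nu$, so $|Du|^2 = |D_\top u|^2 + |D_\perp u|^2$. Define $T^p_u = \frac{|Du|^p}{p}\mathrm{Id} - |Du|^{p-2}(Du)^T Du$. Then $(p-1)|D_\perp u|^p \le -p\langle \nu, T^p_u[\nu]\rangle + (3-p)|D_\top u|^p$. -/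
/-!
Write `a = |D_⊥ u|`, `t = |D_⊤ u|` and `n = |Du|`, so that `n² = a² + t²` (Cauchy–Schwarz gives
`a ≤ n`, so the square root defining `t` is not truncated). Young's inequality with exponents
`2/p` and `2/(2-p)` applied to `a^p = (a² n^{p-2})^{p/2} (n^p)^{(2-p)/2}` bounds the term
`p n^{p-2} a²` from below by `2 a^p - (2-p) n^p`, and subadditivity of `s ↦ s^{p/2}` gives
`n^p ≤ a^p + t^p`; the estimate is a nonnegative combination of these two inequalities.
-/

open Finset

theorem norm_sum_smul_le_sqrt_mul_sqrt {ι E : Type*} [Fintype ι] [SeminormedAddCommGroup E]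
    [NormedSpace ℝ E] (c : ι → ℝ) (v : ι → E) :
    ‖∑ i, c i • v i‖ ≤ √(∑ i, c i ^ 2) * √(∑ i, ‖v i‖ ^ 2) :=
  (norm_sum_le _ _).trans <| by
    simpa [norm_smul, sq_abs] using Real.sum_mul_le_sqrt_mul_sqrt univ (|c ·|) (‖v ·‖)

namespace Real

theorem sq_rpow_half {x : ℝ} (hx : 0 ≤ x) (p : ℝ) : (x ^ 2) ^ (p / 2) = x ^ p := by
  rw [← rpow_natCast_mul hx, Nat.cast_ofNat, mul_div_cancel₀ p two_ne_zero]

theorem rpow_le_of_sq_eq_sq_add_sq {n a t p : ℝ} (hn : 0 ≤ n) (ha : 0 ≤ a) (ht : 0 ≤ t)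
    (hnat : n ^ 2 = a ^ 2 + t ^ 2) (hp0 : 0 ≤ p) (hp2 : p ≤ 2) :
    n ^ p ≤ a ^ p + t ^ p := by
  rw [← sq_rpow_half hn, ← sq_rpow_half ha, ← sq_rpow_half ht, hnat]
  exact rpow_add_le_add_rpow (by positivity) (by positivity) (by linarith) (by linarith)

theorem rpow_le_young_sq {a n p : ℝ} (ha : 0 ≤ a) (hn : 0 < n) (hp0 : 0 ≤ p) (hp2 : p ≤ 2) :
    a ^ p ≤ p / 2 * (a ^ 2 * n ^ (p - 2)) + (2 - p) / 2 * n ^ p := by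
  have hfactor : (a ^ 2 * n ^ (p - 2)) ^ (p / 2) * (n ^ p) ^ ((2 - p) / 2) = a ^ p := by
    rw [mul_rpow (by positivity) (by positivity), sq_rpow_half ha, ← rpow_mul hn.le,
      ← rpow_mul hn.le, mul_assoc, ← rpow_add hn]
    ring_nf
    rw [rpow_zero, mul_one]
  rw [← hfactor]
  exact geom_mean_le_arith_mean2_weighted (by linarith) (by linarith) (by positivity)
    (by positivity) (by ring)

theorem normal_trace_estimate {n a t p : ℝ} (hn : 0 ≤ n) (ha : 0 ≤ a) (ht : 0 ≤ t)
    (hnat : n ^ 2 = a ^ 2 + t ^ 2) (hp1 : 1 ≤ p) (hp2 : p ≤ 2) :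
    (p - 1) * a ^ p ≤ -(p * (n ^ p / p - n ^ (p - 2) * a ^ 2)) + (3 - p) * t ^ p := by
  have hp0 : 0 < p := by linarith
  rcases hn.eq_or_lt with rfl | hn
  · obtain ⟨rfl, rfl⟩ : a = 0 ∧ t = 0 := by constructor <;> nlinarith
    simp [zero_rpow hp0.ne']
  have hyoung := rpow_le_young_sq ha hn hp0.le hp2
  have hsub := rpow_le_of_sq_eq_sq_add_sq hn.le ha ht hnat hp0.le hp2
  have hexpand : p * (n ^ p / p - n ^ (p - 2) * a ^ 2) = n ^ p - p * (a ^ 2 * n ^ (p - 2)) := by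
    field_simp
  rw [hexpand]
  nlinarith [mul_le_mul_of_nonneg_left hsub (by linarith : (0 : ℝ) ≤ 3 - p)]

end Real

/-- Normal derivative estimate at a boundary point: for a map with partial derivatives
`D i`, unit normal `νv`, normal part `Dperp = ∑ νv i • D i`, full gradient norm
`nd = |Du|`, tangential norm `ntop` with `nd² = ntop² + |Dperp|²`, and
`⟨ν, T^p_u[ν]⟩ = |Du|^p/p - |Du|^{p-2}|Dperp|²`, one has
`(p-1)|Dperp|^p ≤ -p⟨ν,T^p_u[ν]⟩ + (3-p)|Dtop|^p` for `1 ≤ p ≤ 2`. -/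
theorem stmt5 (k : ℕ) (p : ℝ) (hp1 : 1 ≤ p) (hp2 : p ≤ 2)
    (D : Fin 3 → EuclideanSpace ℝ (Fin k)) (νv : Fin 3 → ℝ)
    (hν : ∑ i, νv i ^ (2 : ℕ) = 1)
    (Dperp : EuclideanSpace ℝ (Fin k)) (hDperp : Dperp = ∑ i, νv i • D i)
    (nd : ℝ) (hnd : nd = Real.sqrt (∑ i, ‖D i‖ ^ (2 : ℕ)))
    (ntop : ℝ) (hntop : ntop = Real.sqrt (nd ^ (2 : ℕ) - ‖Dperp‖ ^ (2 : ℕ)))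
    (tT : ℝ) (htT : tT = nd ^ p / p - nd ^ (p - 2) * ‖Dperp‖ ^ (2 : ℕ)) :
    (p - 1) * ‖Dperp‖ ^ p ≤ -(p * tT) + (3 - p) * ntop ^ p := by
  have hnd0 : 0 ≤ nd := hnd ▸ Real.sqrt_nonneg _
  have hperp_le : ‖Dperp‖ ≤ nd := by
    simpa [hDperp, hnd, hν] using norm_sum_smul_le_sqrt_mul_sqrt νv D
  have hsplit : nd ^ 2 = ‖Dperp‖ ^ 2 + ntop ^ 2 := by
    rw [hntop, Real.sq_sqrt (by nlinarith [norm_nonneg Dperp])]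
    ring
  rw [htT]
  exact Real.normal_trace_estimate hnd0 (norm_nonneg _) (hntop ▸ Real.sqrt_nonneg _) hsplit hp1 hp2
end

section
/- Let $p \in (1,2]$, $\nu$ a unit vector, and $u$ differentiable at a point with gradient decomposition $|Du|^2 = |D_\top u|^2 + |D_\perp u|^2$ where $D_\perp u = Du[\nu]$. If $(p-1)|D_\perp u|^2 \le |D_\top u|^2$, then $0 \le \langle \nu, T^p_u[\nu]\rangle \le \frac{2}{p}|D_\top u|^p$, where $T^p_u = \frac{|Du|^p}{p}\mathrm{Id} - |Du|^{p-2}(Du)^T Du$. -/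
/- Writing `N = |Du|`, `a = |D_⊥u|²` and `t² = N² - a = |D_⊤u|²` (Cauchy–Schwarz and `|ν| = 1`
give `a ≤ N²`), one has
`⟨ν, T^p_u[ν]⟩ = N^(p-2) (t² - (p-1) a) / p`, which is nonnegative by hypothesis and at most
`N^(p-2) t² / p ≤ t^(p-2) t² / p = t^p / p`, since `t ≤ N` and `p - 2 ≤ 0`. -/

open Finset Real

theorem sq_norm_sum_smul_le {ι E : Type*} [SeminormedAddCommGroup E] [NormedSpace ℝ E]
    (s : Finset ι) (c : ι → ℝ) (x : ι → E) :
    ‖∑ i ∈ s, c i • x i‖ ^ 2 ≤ (∑ i ∈ s, c i ^ 2) * ∑ i ∈ s, ‖x i‖ ^ 2 :=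
  calc ‖∑ i ∈ s, c i • x i‖ ^ 2 ≤ (∑ i ∈ s, |c i| * ‖x i‖) ^ 2 := by
        gcongr
        exact (norm_sum_le _ _).trans_eq (by simp only [norm_smul, Real.norm_eq_abs])
    _ ≤ (∑ i ∈ s, |c i| ^ 2) * ∑ i ∈ s, ‖x i‖ ^ 2 := sum_mul_sq_le_sq_mul_sq _ _ _
    _ = (∑ i ∈ s, c i ^ 2) * ∑ i ∈ s, ‖x i‖ ^ 2 := by simp only [sq_abs]

theorem rpow_div_sub_rpow_sub_two_mul_eq {N p : ℝ} (hN : 0 < N) (hp : p ≠ 0) (a : ℝ) :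
    N ^ p / p - N ^ (p - 2) * a = N ^ (p - 2) / p * (N ^ 2 - p * a) := by
  have hNp : N ^ p = N ^ (p - 2) * N ^ 2 := by
    rw [← rpow_natCast N 2, ← rpow_add hN]
    norm_num
  rw [hNp]
  field_simp

theorem rpow_div_sub_rpow_sub_two_mul_bounds {p N a t : ℝ} (hp1 : 1 < p) (hp2 : p ≤ 2)
    (hN : 0 ≤ N) (ha : 0 ≤ a) (ht : 0 ≤ t) (htN : t ^ 2 = N ^ 2 - a)
    (hsmall : (p - 1) * a ≤ t ^ 2) :
    0 ≤ N ^ p / p - N ^ (p - 2) * a ∧ N ^ p / p - N ^ (p - 2) * a ≤ t ^ p / p := by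
  have hp0 : 0 < p := by linarith
  rcases ht.eq_or_lt with rfl | htpos
  · have ha0 : a = 0 := by nlinarith
    have hN0 : N = 0 := by subst ha0; nlinarith
    simp [ha0, hN0, zero_rpow hp0.ne']
  have htN' : t ≤ N := by nlinarith
  have hNpos : 0 < N := htpos.trans_le htN'
  have hcoef : 0 ≤ N ^ (p - 2) / p := by positivity
  rw [rpow_div_sub_rpow_sub_two_mul_eq hNpos hp0.ne',
    show N ^ 2 - p * a = t ^ 2 - (p - 1) * a by rw [htN]; ring]
  refine ⟨mul_nonneg hcoef (sub_nonneg.2 hsmall), ?_⟩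
  calc N ^ (p - 2) / p * (t ^ 2 - (p - 1) * a) ≤ N ^ (p - 2) / p * t ^ 2 := by
        gcongr
        nlinarith
    _ ≤ t ^ (p - 2) / p * t ^ 2 := by
        have := rpow_le_rpow_of_nonpos htpos htN' (by linarith : p - 2 ≤ 0)
        gcongr
    _ = t ^ p / p := by
        rw [div_mul_eq_mul_div, ← rpow_natCast t 2, ← rpow_add htpos]
        norm_num

/-- For `1 < p ≤ 2`, at a point where the gradient satisfies
`(p-1)|D_⊥u|² ≤ |D_⊤u|²`, the normal component of the stress-energy tensor
`⟨ν, T^p_u[ν]⟩ = |Du|^p/p - |Du|^{p-2}|D_⊥u|²` satisfies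
`0 ≤ ⟨ν, T^p_u[ν]⟩ ≤ (2/p)|D_⊤u|^p`. -/
theorem stmt6 (k : ℕ) (p : ℝ) (hp1 : 1 < p) (hp2 : p ≤ 2)
    (D : Fin 3 → EuclideanSpace ℝ (Fin k)) (νv : Fin 3 → ℝ)
    (hν : ∑ i, νv i ^ (2 : ℕ) = 1)
    (Dperp : EuclideanSpace ℝ (Fin k)) (hDperp : Dperp = ∑ i, νv i • D i)
    (nd : ℝ) (hnd : nd = Real.sqrt (∑ i, ‖D i‖ ^ (2 : ℕ)))
    (ntop : ℝ) (hntop : ntop = Real.sqrt (nd ^ (2 : ℕ) - ‖Dperp‖ ^ (2 : ℕ)))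
    (tT : ℝ) (htT : tT = nd ^ p / p - nd ^ (p - 2) * ‖Dperp‖ ^ (2 : ℕ))
    (hsmall : (p - 1) * ‖Dperp‖ ^ (2 : ℕ) ≤ ntop ^ (2 : ℕ)) :
    0 ≤ tT ∧ tT ≤ 2 / p * ntop ^ p := by
  have hperp : ‖Dperp‖ ^ 2 ≤ nd ^ 2 := by
    rw [hnd, sq_sqrt (by positivity), hDperp]
    simpa only [hν, one_mul] using sq_norm_sum_smul_le univ νv D
  have hntop2 : ntop ^ 2 = nd ^ 2 - ‖Dperp‖ ^ 2 := by
    rw [hntop, sq_sqrt (sub_nonneg.2 hperp)]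
  obtain ⟨hlower, hupper⟩ := rpow_div_sub_rpow_sub_two_mul_bounds hp1 hp2
    (hnd ▸ sqrt_nonneg _) (by positivity) (hntop ▸ sqrt_nonneg _) hntop2 hsmall
  refine ⟨htT ▸ hlower, htT ▸ hupper.trans ?_⟩
  have hntop_p : 0 ≤ ntop ^ p := rpow_nonneg (hntop ▸ sqrt_nonneg _) p
  rw [div_mul_eq_mul_div]
  gcongr
  linarith
end

section
/- Let $\mu_n, \mu_*$ be finite positive Radon measures on a compact set $\overline{\Omega} \subset \mathbb{R}^3$ with $\mu_n \overset{*}{\rightharpoonup} \mu_*$ weakly* (i.e., $\int \varphi \, d\mu_n \to \int \varphi \, d\mu_*$ for all $\varphi \in C(\overline{\Omega})$). Suppose $x_0 \in \Omega$, $(p_n) \subset [1,2)$ with $p_n \nearrow 2$, and for every $0 < \varrho < r < \mathrm{dist}(x_0, \partial\Omega)$ and each $n$, $\varrho^{p_n - 3}\mu_n(B^3_\varrho(x_0)) \le r^{p_n-3}\mu_n(\overline{B}^3_r(x_0))$. Then the function $r \mapsto \mu_*(\overline{B}^3_r(x_0))/r$ is nondecreasing on $(0, \mathrm{dist}(x_0,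 \partial\Omega))$. In particular, the one-dimensional density $\Theta_1(\mu_*, x_0) = \lim_{r \to 0^+} \mu_*(\overline{B}^3_r(x_0))/(2r)$ exists and is finite. -/
open MeasureTheory Metric Filter Set Topology

/-!
Apply the monotonicity inequality of `μ_n` to the radii `ϱ + ε < r - ε` and squeeze it between
integrals of Urysohn functions `1_{B̄_ϱ} ≤ ψ ≤ 1_{B_{ϱ+ε}}` and `1_{B̄_{r-ε}} ≤ φ ≤ 1_{B_r}`:
`(ϱ+ε)^(p_n-3) ∫ ψ dμ_n ≤ (r-ε)^(p_n-3) ∫ φ dμ_n`. This inequality between integrals of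
continuous functions survives the weak* limit, with exponent `2 - 3 = -1`, and letting `ε → 0`
gives `μ(B̄_ϱ) / ϱ ≤ μ(B̄_r) / r`. A nonnegative monotone function has a limit at `0⁺`.
-/

theorem IsOpen.infDist_frontier_pos {E : Type*} [NormedAddCommGroup E] [NormedSpace ℝ E]
    [Nontrivial E] {Ω : Set E} (hΩo : IsOpen Ω) (hΩb : Bornology.IsBounded Ω) {x : E}
    (hx : x ∈ Ω) : 0 < infDist x (frontier Ω) := by
  have hne : (frontier Ω).Nonempty :=
    nonempty_frontier_iff.2 ⟨⟨x, hx⟩, fun h => NormedSpace.unbounded_univ ℝ E (h ▸ hΩb)⟩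
  rw [← infDist_pos_iff_notMem_closure hne, isClosed_frontier.closure_eq, hΩo.frontier_eq]
  exact fun h => h.2 hx

theorem exists_continuous_measureReal_le_integral_le {X : Type*} [TopologicalSpace X]
    [NormalSpace X] [MeasurableSpace X] [OpensMeasurableSpace X] {F U : Set X}
    (hF : IsClosed F) (hU : IsOpen U) (hFU : F ⊆ U) :
    ∃ ψ : X → ℝ, Continuous ψ ∧ ∀ (μ : Measure X) [IsFiniteMeasure μ],
      μ.real F ≤ ∫ x, ψ x ∂μ ∧ ∫ x, ψ x ∂μ ≤ μ.real U := by
  obtain ⟨f, hf0, hf1, hf01⟩ := exists_continuous_zero_one_of_isClosed hU.isClosed_compl hF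
    (disjoint_compl_left_iff_subset.2 hFU)
  refine ⟨f, f.continuous, fun μ _ => ?_⟩
  have hint : Integrable f μ := .of_bound f.continuous.measurable.aestronglyMeasurable 1
    (.of_forall fun x => abs_le.2 ⟨by linarith [(hf01 x).1], (hf01 x).2⟩)
  rw [← integral_indicator_one hF.measurableSet, ← integral_indicator_one hU.measurableSet]
  constructor
  · refine integral_mono ((integrable_const 1).indicator hF.measurableSet) hint fun x => ?_
    by_cases hx : x ∈ F
    · simp [hx, hf1 hx]
    · simpa [hx] using (hf01 x).1
  · refine integral_mono hint ((integrable_const 1).indicator hU.measurableSet) fun x => ?_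
    by_cases hx : x ∈ U
    · simpa [hx] using (hf01 x).2
    · simp [hx, hf0 (mem_compl hx)]

section WeakLimit

variable {X : Type*} [MetricSpace X] [MeasurableSpace X] [OpensMeasurableSpace X]
  {μn : ℕ → Measure X} [∀ n, IsFiniteMeasure (μn n)] {μ : Measure X} [IsFiniteMeasure μ]
  {x : X} {q : ℕ → ℝ} {s R : ℝ}

theorem rpow_mul_measureReal_closedBall_le_ball_of_tendsto
    (hweak : ∀ φ : X → ℝ, Continuous φ →
      Tendsto (fun n => ∫ y, φ y ∂μn n) atTop (𝓝 (∫ y, φ y ∂μ)))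
    (hq : Tendsto q atTop (𝓝 s))
    (hmono : ∀ n, ∀ ϱ r : ℝ, 0 < ϱ → ϱ < r → r < R →
      ϱ ^ q n * (μn n).real (ball x ϱ) ≤ r ^ q n * (μn n).real (closedBall x r))
    {ϱ a b r : ℝ} (ha : 0 < a) (hϱa : ϱ < a) (hab : a < b) (hbr : b < r) (hbR : b < R) :
    a ^ s * μ.real (closedBall x ϱ) ≤ b ^ s * μ.real (ball x r) := by
  have hb : 0 < b := ha.trans hab
  obtain ⟨ψ, hψc, hψ⟩ := exists_continuous_measureReal_le_integral_le
    (isClosed_closedBall (x := x)) isOpen_ball (closedBall_subset_ball hϱa)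
  obtain ⟨φ, hφc, hφ⟩ := exists_continuous_measureReal_le_integral_le
    (isClosed_closedBall (x := x)) isOpen_ball (closedBall_subset_ball hbr)
  have hn : ∀ n, a ^ q n * ∫ y, ψ y ∂μn n ≤ b ^ q n * ∫ y, φ y ∂μn n := fun n =>
    calc a ^ q n * ∫ y, ψ y ∂μn n ≤ a ^ q n * (μn n).real (ball x a) :=
          mul_le_mul_of_nonneg_left (hψ _).2 (Real.rpow_nonneg ha.le _)
      _ ≤ b ^ q n * (μn n).real (closedBall x b) := hmono n a b ha hab hbR
      _ ≤ b ^ q n * ∫ y, φ y ∂μn n :=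
          mul_le_mul_of_nonneg_left (hφ _).1 (Real.rpow_nonneg hb.le _)
  have hlim : a ^ s * ∫ y, ψ y ∂μ ≤ b ^ s * ∫ y, φ y ∂μ :=
    le_of_tendsto_of_tendsto' (((Real.continuousAt_const_rpow ha.ne').tendsto.comp hq).mul
      (hweak ψ hψc)) (((Real.continuousAt_const_rpow hb.ne').tendsto.comp hq).mul
      (hweak φ hφc)) hn
  calc a ^ s * μ.real (closedBall x ϱ) ≤ a ^ s * ∫ y, ψ y ∂μ :=
        mul_le_mul_of_nonneg_left (hψ μ).1 (Real.rpow_nonneg ha.le _)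
    _ ≤ b ^ s * ∫ y, φ y ∂μ := hlim
    _ ≤ b ^ s * μ.real (ball x r) :=
        mul_le_mul_of_nonneg_left (hφ μ).2 (Real.rpow_nonneg hb.le _)

theorem rpow_mul_measureReal_closedBall_le_of_tendsto
    (hweak : ∀ φ : X → ℝ, Continuous φ →
      Tendsto (fun n => ∫ y, φ y ∂μn n) atTop (𝓝 (∫ y, φ y ∂μ)))
    (hq : Tendsto q atTop (𝓝 s))
    (hmono : ∀ n, ∀ ϱ r : ℝ, 0 < ϱ → ϱ < r → r < R →
      ϱ ^ q n * (μn n).real (ball x ϱ) ≤ r ^ q n * (μn n).real (closedBall x r))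
    {ϱ r : ℝ} (hϱ : 0 < ϱ) (hϱr : ϱ < r) (hrR : r < R) :
    ϱ ^ s * μ.real (closedBall x ϱ) ≤ r ^ s * μ.real (closedBall x r) := by
  have hε : ∀ᶠ ε in 𝓝[>] 0,
      (ϱ + ε) ^ s * μ.real (closedBall x ϱ) ≤ (r - ε) ^ s * μ.real (closedBall x r) := by
    filter_upwards [Ioo_mem_nhdsGT (show (0 : ℝ) < (r - ϱ) / 2 by linarith)] with ε ⟨hε0, hε⟩
    refine (rpow_mul_measureReal_closedBall_le_ball_of_tendsto (ϱ := ϱ) (a := ϱ + ε)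
      (b := r - ε) (r := r) hweak hq hmono (by linarith) (by linarith) (by linarith)
      (by linarith) (by linarith)).trans ?_
    exact mul_le_mul_of_nonneg_left (measureReal_mono ball_subset_closedBall)
      (Real.rpow_nonneg (by linarith) _)
  have hϱ' : ContinuousAt (fun ε : ℝ => (ϱ + ε) ^ s * μ.real (closedBall x ϱ)) 0 := by
    fun_prop (disch := simp [hϱ.ne'])
  have hr' : ContinuousAt (fun ε : ℝ => (r - ε) ^ s * μ.real (closedBall x r)) 0 := by
    fun_prop (disch := simp [(hϱ.trans hϱr).ne'])
  simpa using le_of_tendsto_of_tendsto (hϱ'.tendsto.mono_left nhdsWithin_le_nhds)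
    (hr'.tendsto.mono_left nhdsWithin_le_nhds) hε

theorem monotoneOn_measureReal_closedBall_div_of_tendsto
    (hweak : ∀ φ : X → ℝ, Continuous φ →
      Tendsto (fun n => ∫ y, φ y ∂μn n) atTop (𝓝 (∫ y, φ y ∂μ)))
    (hq : Tendsto q atTop (𝓝 (-1)))
    (hmono : ∀ n, ∀ ϱ r : ℝ, 0 < ϱ → ϱ < r → r < R →
      ϱ ^ q n * (μn n).real (ball x ϱ) ≤ r ^ q n * (μn n).real (closedBall x r)) :
    MonotoneOn (fun r => μ.real (closedBall x r) / r) (Ioo 0 R) := by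
  intro ϱ hϱ r hr hϱr
  rcases hϱr.eq_or_lt with rfl | hϱr
  · exact le_rfl
  simpa only [Real.rpow_neg_one, inv_mul_eq_div] using
    rpow_mul_measureReal_closedBall_le_of_tendsto hweak hq hmono hϱ.1 hϱr hr.2

end WeakLimit

theorem stmt13_general (Ω : Set (EuclideanSpace ℝ (Fin 3)))
    (hΩo : IsOpen Ω) (hΩb : Bornology.IsBounded Ω)
    (μn : ℕ → Measure (EuclideanSpace ℝ (Fin 3)))
    (μs : Measure (EuclideanSpace ℝ (Fin 3)))
    [∀ n, IsFiniteMeasure (μn n)] [IsFiniteMeasure μs]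
    (hweak : ∀ φ : EuclideanSpace ℝ (Fin 3) → ℝ, Continuous φ →
      Tendsto (fun n => ∫ x, φ x ∂μn n) atTop (𝓝 (∫ x, φ x ∂μs)))
    (x0 : EuclideanSpace ℝ (Fin 3)) (hx0 : x0 ∈ Ω)
    (p : ℕ → ℝ)
    (hpt : Tendsto p atTop (𝓝 2))
    (hmono : ∀ n, ∀ ϱ r : ℝ, 0 < ϱ → ϱ < r → r < infDist x0 (frontier Ω) →
      ϱ ^ (p n - 3) * ((μn n) (ball x0 ϱ)).toReal ≤
        r ^ (p n - 3) * ((μn n) (closedBall x0 r)).toReal) :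
    (∀ r1 ∈ Set.Ioo (0 : ℝ) (infDist x0 (frontier Ω)),
      ∀ r2 ∈ Set.Ioo (0 : ℝ) (infDist x0 (frontier Ω)), r1 ≤ r2 →
        (μs (closedBall x0 r1)).toReal / r1 ≤ (μs (closedBall x0 r2)).toReal / r2) ∧
      ∃ L : ℝ, Tendsto (fun r : ℝ => (μs (closedBall x0 r)).toReal / (2 * r))
        (𝓝[>] 0) (𝓝 L) := by
  have hd := hΩo.infDist_frontier_pos hΩb hx0
  have hq : Tendsto (fun n => p n - 3) atTop (𝓝 (-1)) := by
    convert hpt.sub_const 3 using 2; norm_num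
  have hmon : MonotoneOn (fun r => μs.real (closedBall x0 r) / r)
      (Ioo 0 (infDist x0 (frontier Ω))) :=
    monotoneOn_measureReal_closedBall_div_of_tendsto hweak hq hmono
  refine ⟨fun r1 h1 r2 h2 h12 => hmon h1 h2 h12, ?_⟩
  have hbdd : BddBelow ((fun r => μs.real (closedBall x0 r) / r) ''
      Ioo 0 (infDist x0 (frontier Ω))) :=
    ⟨0, by rintro _ ⟨r, hr, rfl⟩; exact div_nonneg measureReal_nonneg hr.1.le⟩
  refine ⟨_, ((hmon.tendsto_nhdsWithin_Ioo_right (nonempty_Ioo.2 hd) hbdd).div_const 2).congr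
    fun r => ?_⟩
  simp only [measureReal_def, div_div, mul_comm]

/-- Monotonicity of the rescaled mass of the limit measure. If finite measures `μn`
supported on `closure Ω` converge weakly* to `μs`, `p n ↗ 2`, and each `μn n` satisfies
the rescaled monotonicity formula
`ϱ^{p_n-3} μn(B_ϱ(x₀)) ≤ r^{p_n-3} μn(closedBall_r(x₀))` for `0 < ϱ < r < dist(x₀,∂Ω)`,
then `r ↦ μs(closedBall_r(x₀))/r` is nondecreasing on `(0, dist(x₀,∂Ω))`; in particular
the one-dimensional density `Θ₁(μs,x₀) = lim_{r→0⁺} μs(closedBall_r(x₀))/(2r)` exists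
(as a finite limit). -/
theorem stmt13 (Ω : Set (EuclideanSpace ℝ (Fin 3)))
    (hΩo : IsOpen Ω) (hΩb : Bornology.IsBounded Ω)
    (μn : ℕ → Measure (EuclideanSpace ℝ (Fin 3)))
    (μs : Measure (EuclideanSpace ℝ (Fin 3)))
    [∀ n, IsFiniteMeasure (μn n)] [IsFiniteMeasure μs]
    (hsupp : ∀ n, μn n (closure Ω)ᶜ = 0) (hsupps : μs (closure Ω)ᶜ = 0)
    (hweak : ∀ φ : EuclideanSpace ℝ (Fin 3) → ℝ, Continuous φ →
      Tendsto (fun n => ∫ x, φ x ∂μn n) atTop (𝓝 (∫ x, φ x ∂μs)))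
    (x0 : EuclideanSpace ℝ (Fin 3)) (hx0 : x0 ∈ Ω)
    (p : ℕ → ℝ) (hp : ∀ n, p n ∈ Set.Ico (1 : ℝ) 2) (hpmono : Monotone p)
    (hpt : Tendsto p atTop (𝓝 2))
    (hmono : ∀ n, ∀ ϱ r : ℝ, 0 < ϱ → ϱ < r → r < infDist x0 (frontier Ω) →
      ϱ ^ (p n - 3) * ((μn n) (ball x0 ϱ)).toReal ≤
        r ^ (p n - 3) * ((μn n) (closedBall x0 r)).toReal) :
    (∀ r1 ∈ Set.Ioo (0 : ℝ) (infDist x0 (frontier Ω)),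
      ∀ r2 ∈ Set.Ioo (0 : ℝ) (infDist x0 (frontier Ω)), r1 ≤ r2 →
        (μs (closedBall x0 r1)).toReal / r1 ≤ (μs (closedBall x0 r2)).toReal / r2) ∧
      ∃ L : ℝ, Tendsto (fun r : ℝ => (μs (closedBall x0 r)).toReal / (2 * r))
        (𝓝[>] 0) (𝓝 L) :=
  stmt13_general Ω hΩo hΩb μn μs hweak x0 hx0 p hpt hmono
end
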